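/- arXiv:1307.8232 — 3 statements merged into one kernel-verified Lean document; each statement's English description precedes it below -/
import Mathlib

section
/- Let U be a set of measurable functions on [0,T] each bounded by 1 in absolute value almost everywhere. Define J₀(u) = μ({t : u(t) ≠ 0}) and J₁(u) = ∫₀ᵀ |u(t)| dt. Suppose the set U₁* of minimizers of J₁ over U is nonempty, and every element of U₁* takes values in {-1,0,1} almost everywhere. Then the set U₀* of minimizers of J₀ over U equals U₁*. -/
/-! Since `|u| ≤ 1`, the pointwise bound `|u t| ≤ 𝟙[u t ≠ 0]` gives `J₁ ≤ J₀` on `U`, with equality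
for bang-off-bang controls. Hence for any `J₁`-minimizer `w` (which is bang-off-bang) and any
admissible `v`, `J₁ u ≤ J₀ u ≤ J₀ w = J₁ w ≤ J₁ v` whenever `u` minimizes `J₀`, and
`J₀ u = J₁ u ≤ J₁ v ≤ J₀ v` whenever `u` minimizes `J₁`. -/

open MeasureTheory Set

noncomputable def J0 (T : ℝ) (u : ℝ → ℝ) : ℝ :=
  (volume {t ∈ Icc (0:ℝ) T | u t ≠ 0}).toReal

noncomputable def J1 (T : ℝ) (u : ℝ → ℝ) : ℝ :=
  ∫ t in Icc (0:ℝ) T, |u t|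

theorem minimizers_eq_of_le_of_eq_on_minimizers {α β : Type*} [Preorder β] {U : Set α}
    {f g : α → β} (hle : ∀ u ∈ U, f u ≤ g u)
    (heq : ∀ u ∈ {u ∈ U | ∀ v ∈ U, f u ≤ f v}, g u = f u)
    (hne : {u ∈ U | ∀ v ∈ U, f u ≤ f v}.Nonempty) :
    {u ∈ U | ∀ v ∈ U, g u ≤ g v} = {u ∈ U | ∀ v ∈ U, f u ≤ f v} := by
  obtain ⟨w, hwU, hwmin⟩ := hne
  ext u
  refine ⟨fun ⟨huU, hmin⟩ => ⟨huU, fun v hv => ?_⟩, fun ⟨huU, hmin⟩ => ⟨huU, fun v hv => ?_⟩⟩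
  · calc f u ≤ g u := hle u huU
      _ ≤ g w := hmin w hwU
      _ = f w := heq w ⟨hwU, hwmin⟩
      _ ≤ f v := hwmin v hv
  · calc g u = f u := heq u ⟨huU, hmin⟩
      _ ≤ f v := hmin v hv
      _ ≤ g v := hle v hv

section Sparsity

variable {α : Type*} [MeasurableSpace α] {μ : Measure α} {u : α → ℝ}

theorem integral_indicator_ne_zero (hu : Measurable u) :
    ∫ t, {t | u t ≠ 0}.indicator 1 t ∂μ = μ.real {t | u t ≠ 0} :=
  integral_indicator_one (hu (measurableSet_singleton 0).compl)

theorem integral_abs_le_measureReal_ne_zero [IsFiniteMeasure μ] (hu : Measurable u)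
    (hb : ∀ᵐ t ∂μ, |u t| ≤ 1) : ∫ t, |u t| ∂μ ≤ μ.real {t | u t ≠ 0} := by
  rw [← integral_indicator_ne_zero hu]
  have hind : Integrable ({t | u t ≠ 0}.indicator (1 : α → ℝ)) μ :=
    (integrable_const (1 : ℝ)).indicator (hu (measurableSet_singleton 0).compl)
  have habs : Integrable (fun t => |u t|) μ :=
    (integrable_const 1).mono' hu.abs.aestronglyMeasurable (by simpa using hb)
  refine integral_mono_ae habs hind ?_
  filter_upwards [hb] with t ht
  by_cases h : u t = 0
  · simp [h]
  · simpa [h] using ht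

theorem integral_abs_eq_measureReal_ne_zero (hu : Measurable u)
    (hbang : ∀ᵐ t ∂μ, u t ∈ ({-1, 0, 1} : Set ℝ)) :
    ∫ t, |u t| ∂μ = μ.real {t | u t ≠ 0} := by
  rw [← integral_indicator_ne_zero hu]
  refine integral_congr_ae ?_
  filter_upwards [hbang] with t ht
  rcases ht with h | h | h <;> simp_all

end Sparsity

theorem J0_eq_measureReal_restrict (T : ℝ) (u : ℝ → ℝ) :
    J0 T u = (volume.restrict (Icc (0:ℝ) T)).real {t | u t ≠ 0} := by
  rw [measureReal_restrict_apply' measurableSet_Icc, inter_comm]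
  rfl

theorem hands_off_eq_L1_general (T : ℝ) (U : Set (ℝ → ℝ))
    (hU : ∀ u ∈ U, Measurable u ∧ (∀ᵐ t ∂(volume.restrict (Icc (0:ℝ) T)), |u t| ≤ 1))
    (hne : {u ∈ U | ∀ v ∈ U, J1 T u ≤ J1 T v}.Nonempty)
    (hbang : ∀ u ∈ {u ∈ U | ∀ v ∈ U, J1 T u ≤ J1 T v},
      ∀ᵐ t ∂(volume.restrict (Icc (0:ℝ) T)), u t ∈ ({-1, 0, 1} : Set ℝ)) :
    {u ∈ U | ∀ v ∈ U, J0 T u ≤ J0 T v} = {u ∈ U | ∀ v ∈ U, J1 T u ≤ J1 T v} := by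
  refine minimizers_eq_of_le_of_eq_on_minimizers (fun u hu => ?_) (fun u hu => ?_) hne
  · rw [J0_eq_measureReal_restrict]
    exact integral_abs_le_measureReal_ne_zero (hU u hu).1 (hU u hu).2
  · rw [J0_eq_measureReal_restrict]
    exact (integral_abs_eq_measureReal_ne_zero (hU u hu.1).1 (hbang u hu)).symm

theorem hands_off_eq_L1 (T : ℝ) (hT : 0 < T) (U : Set (ℝ → ℝ))
    (hU : ∀ u ∈ U, Measurable u ∧ (∀ᵐ t ∂(volume.restrict (Icc (0:ℝ) T)), |u t| ≤ 1))
    (hne : {u ∈ U | ∀ v ∈ U, J1 T u ≤ J1 T v}.Nonempty)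
    (hbang : ∀ u ∈ {u ∈ U | ∀ v ∈ U, J1 T u ≤ J1 T v},
      ∀ᵐ t ∂(volume.restrict (Icc (0:ℝ) T)), u t ∈ ({-1, 0, 1} : Set ℝ)) :
    {u ∈ U | ∀ v ∈ U, J0 T u ≤ J0 T v} = {u ∈ U | ∀ v ∈ U, J1 T u ≤ J1 T v} :=
  hands_off_eq_L1_general T U hU hne hbang
end

section
/- Under the assumptions of the equivalence setup, every minimizer of J₁ over U is also a minimizer of J₀ over U; in particular, if U₁* is nonempty then U₀* is nonempty. -/
open MeasureTheory Set

/-!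
For `|u| ≤ 1` we have `|u| ≤ 𝟙_{u ≠ 0}` pointwise, so `J₁ ≤ J₀` on `U`, with equality for
bang-off-bang controls `u ∈ {-1, 0, 1}`. A minimizer `u` of `J₁` is bang-off-bang, hence
`J₀ u = J₁ u ≤ J₁ v ≤ J₀ v` for every `v ∈ U`.
-/

section support

variable {α : Type*} [MeasurableSpace α] {μ : Measure α} {f : α → ℝ}

theorem integral_abs_le_measureReal_support [IsFiniteMeasure μ] (hf : Measurable f)
    (hbound : ∀ᵐ x ∂μ, |f x| ≤ 1) :
    ∫ x, |f x| ∂μ ≤ μ.real (Function.support f) := by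
  have hsupp : MeasurableSet (Function.support f) := measurableSet_support hf
  rw [← integral_indicator_one hsupp]
  refine integral_mono_of_nonneg (.of_forall fun x => abs_nonneg (f x))
    ((integrable_const 1).indicator hsupp) ?_
  filter_upwards [hbound] with x hx
  by_cases h0 : f x = 0 <;> simp [h0, hx]

theorem integral_abs_eq_measureReal_support (hf : Measurable f)
    (hbang : ∀ᵐ x ∂μ, f x ∈ ({-1, 0, 1} : Set ℝ)) :
    ∫ x, |f x| ∂μ = μ.real (Function.support f) := by
  rw [← integral_indicator_one (measurableSet_support hf)]
  refine integral_congr_ae ?_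
  filter_upwards [hbang] with x hx
  obtain h | h | h : f x = -1 ∨ f x = 0 ∨ f x = 1 := hx <;> simp [h]

end support

theorem J0_eq_measureReal_support (T : ℝ) (u : ℝ → ℝ) :
    J0 T u = (volume.restrict (Icc (0:ℝ) T)).real (Function.support u) := by
  rw [measureReal_restrict_apply' measurableSet_Icc, J0, measureReal_def, inter_comm]
  rfl

theorem J1_le_J0 {T : ℝ} {u : ℝ → ℝ} (hu : Measurable u)
    (hbound : ∀ᵐ t ∂(volume.restrict (Icc (0:ℝ) T)), |u t| ≤ 1) :
    J1 T u ≤ J0 T u := by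
  rw [J0_eq_measureReal_support]
  exact integral_abs_le_measureReal_support hu hbound

theorem J1_eq_J0 {T : ℝ} {u : ℝ → ℝ} (hu : Measurable u)
    (hbang : ∀ᵐ t ∂(volume.restrict (Icc (0:ℝ) T)), u t ∈ ({-1, 0, 1} : Set ℝ)) :
    J1 T u = J0 T u := by
  rw [J0_eq_measureReal_support]
  exact integral_abs_eq_measureReal_support hu hbang

theorem L1_min_subset_L0_min_general (T : ℝ) (U : Set (ℝ → ℝ))
    (hU : ∀ u ∈ U, Measurable u ∧ (∀ᵐ t ∂(volume.restrict (Icc (0:ℝ) T)), |u t| ≤ 1))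
    (hbang : ∀ u ∈ {u ∈ U | ∀ v ∈ U, J1 T u ≤ J1 T v},
      ∀ᵐ t ∂(volume.restrict (Icc (0:ℝ) T)), u t ∈ ({-1, 0, 1} : Set ℝ)) :
    {u ∈ U | ∀ v ∈ U, J1 T u ≤ J1 T v} ⊆ {u ∈ U | ∀ v ∈ U, J0 T u ≤ J0 T v} ∧
    ({u ∈ U | ∀ v ∈ U, J1 T u ≤ J1 T v}.Nonempty →
      {u ∈ U | ∀ v ∈ U, J0 T u ≤ J0 T v}.Nonempty) := by
  have hsub : {u ∈ U | ∀ v ∈ U, J1 T u ≤ J1 T v} ⊆ {u ∈ U | ∀ v ∈ U, J0 T u ≤ J0 T v} := by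
    rintro u ⟨huU, hmin⟩
    refine ⟨huU, fun v hvU => ?_⟩
    calc J0 T u = J1 T u := (J1_eq_J0 (hU u huU).1 (hbang u ⟨huU, hmin⟩)).symm
      _ ≤ J1 T v := hmin v hvU
      _ ≤ J0 T v := J1_le_J0 (hU v hvU).1 (hU v hvU).2
  exact ⟨hsub, Nonempty.mono hsub⟩

theorem L1_min_subset_L0_min (T : ℝ) (hT : 0 < T) (U : Set (ℝ → ℝ))
    (hU : ∀ u ∈ U, Measurable u ∧ (∀ᵐ t ∂(volume.restrict (Icc (0:ℝ) T)), |u t| ≤ 1))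
    (hbang : ∀ u ∈ {u ∈ U | ∀ v ∈ U, J1 T u ≤ J1 T v},
      ∀ᵐ t ∂(volume.restrict (Icc (0:ℝ) T)), u t ∈ ({-1, 0, 1} : Set ℝ)) :
    {u ∈ U | ∀ v ∈ U, J1 T u ≤ J1 T v} ⊆ {u ∈ U | ∀ v ∈ U, J0 T u ≤ J0 T v} ∧
    ({u ∈ U | ∀ v ∈ U, J1 T u ≤ J1 T v}.Nonempty →
      {u ∈ U | ∀ v ∈ U, J0 T u ≤ J0 T v}.Nonempty) :=
  L1_min_subset_L0_min_general T U hU hbang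
end

section
/- Pointwise limit of the saturated shrinkage to the dead-zone function: for any fixed λ > 0 and any w ∈ ℝ with w ≠ λ and w ≠ -λ, lim_{r→0⁺} sat(S_{λ/r}(w/r)) = dez_λ(w). -/
open Set Filter

noncomputable def shrink (c v : ℝ) : ℝ :=
  if v < -c then v + c else if c < v then v - c else 0

noncomputable def sat (v : ℝ) : ℝ := max (-1) (min 1 v)

noncomputable def dez (lam w : ℝ) : ℝ :=
  if w < -lam then -1 else if lam < w then 1 else 0

/-! Shrinkage is positively homogeneous, so `sat (shrink (λ / r) (w / r)) = sat (shrink λ w / r)`,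
and for small `r > 0` this is the sign of `shrink λ w`. The branches of `shrink` and `dez`
are cut out by the same conditions, so that sign is exactly `dez λ w`. -/

open Topology

theorem shrink_div_div {r : ℝ} (hr : 0 < r) (c v : ℝ) :
    shrink (c / r) (v / r) = shrink c v / r := by
  simp only [shrink, ← neg_div, div_lt_div_iff_of_pos_right hr]
  split_ifs <;> ring

theorem dez_eq_sign_shrink (lam w : ℝ) : dez lam w = Real.sign (shrink lam w) := by
  unfold dez shrink
  split_ifs with hneg hpos
  · rw [Real.sign_of_neg (by linarith)]
  · rw [Real.sign_of_pos (by linarith)]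
  · rw [Real.sign_zero]

theorem sat_of_one_le {v : ℝ} (hv : 1 ≤ v) : sat v = 1 := by
  simp [sat, hv]

theorem sat_of_le_neg_one {v : ℝ} (hv : v ≤ -1) : sat v = -1 := by
  simp [sat, hv, show v ≤ 1 by linarith]

theorem tendsto_sat_atTop : Tendsto sat atTop (𝓝 1) :=
  tendsto_const_nhds.congr' <| (eventually_ge_atTop 1).mono fun _ hv => (sat_of_one_le hv).symm

theorem tendsto_sat_atBot : Tendsto sat atBot (𝓝 (-1)) :=
  tendsto_const_nhds.congr' <|
    (eventually_le_atBot (-1)).mono fun _ hv => (sat_of_le_neg_one hv).symm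

theorem tendsto_sat_div_nhdsGT_zero (a : ℝ) :
    Tendsto (fun r => sat (a / r)) (𝓝[>] 0) (𝓝 (Real.sign a)) := by
  simp_rw [div_eq_mul_inv]
  rcases lt_trichotomy a 0 with ha | rfl | ha
  · rw [Real.sign_of_neg ha]
    exact tendsto_sat_atBot.comp (tendsto_inv_nhdsGT_zero.const_mul_atTop_of_neg ha)
  · simp [sat]
  · rw [Real.sign_of_pos ha]
    exact tendsto_sat_atTop.comp (tendsto_inv_nhdsGT_zero.const_mul_atTop ha)

theorem sat_shrink_tendsto_dez_general (lam w : ℝ) :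
    Tendsto (fun r : ℝ => sat (shrink (lam / r) (w / r)))
      (nhdsWithin 0 (Ioi 0)) (nhds (dez lam w)) := by
  rw [dez_eq_sign_shrink]
  refine (tendsto_sat_div_nhdsGT_zero (shrink lam w)).congr' ?_
  filter_upwards [self_mem_nhdsWithin] with r hr
  rw [shrink_div_div hr]

theorem sat_shrink_tendsto_dez (lam w : ℝ) (hlam : 0 < lam)
    (hw1 : w ≠ lam) (hw2 : w ≠ -lam) :
    Tendsto (fun r : ℝ => sat (shrink (lam / r) (w / r)))
      (nhdsWithin 0 (Ioi 0)) (nhds (dez lam w)) :=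
  sat_shrink_tendsto_dez_general lam w
end
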